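/- Every totally C-reflexive module X over a commutative noetherian local ring R satisfies Ext_R^1(X, M) = 0 for every finitely generated R-module M of finite C-projective dimension; i.e., G_C(R) ⊆ X_C(R). -/

import Mathlib

open CategoryTheory IsLocalRing RingTheory.Sequence TensorProduct

noncomputable section

/-- The `i`-th Ext module `Ext_R^i(M,N)`. -/
def extM (R : Type) [CommRing R] (M N : Type) [AddCommGroup M] [Module R M]
    [AddCommGroup N] [Module R N] (i : ℕ) : ModuleCat R :=
  ((Ext R (ModuleCat R) i).obj (Opposite.op (ModuleCat.of R M))).obj (ModuleCat.of R N)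

/-- Vanishing of `Ext_R^i(M,N)`. -/
abbrev extVanish (R : Type) [CommRing R] (M N : Type) [AddCommGroup M] [Module R M]
    [AddCommGroup N] [Module R N] (i : ℕ) : Prop :=
  Subsingleton (extM R M N i)

/-- `C` is a semidualizing `R`-module: it is finitely generated, the natural map
`R → Hom_R(C,C)` is bijective and `Ext_R^i(C,C) = 0` for all `i > 0`. -/
def IsSemidualizing (R : Type) [CommRing R] (C : Type) [AddCommGroup C] [Module R C] : Prop :=
  Module.Finite R C ∧ Function.Bijective (LinearMap.lsmul R C) ∧
    ∀ i : ℕ, 0 < i → extVanish R C C i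

/-- `M` has finite `C`-projective dimension: there is a finite exact sequence
`0 → C^{b_n} → ⋯ → C^{b_0} → M → 0`. -/
def HasFinCpd (R : Type) [CommRing R] (C : Type) [AddCommGroup C] [Module R C]
    (M : Type) [AddCommGroup M] [Module R M] : Prop :=
  ∃ (n : ℕ) (b : ℕ → ℕ) (d : ∀ i : ℕ, ((Fin (b (i + 1)) → C) →ₗ[R] (Fin (b i) → C)))
    (aug : (Fin (b 0) → C) →ₗ[R] M),
      Function.Surjective aug ∧ Function.Exact (d 0) aug ∧
      (∀ i, i < n → Function.Exact (d (i + 1)) (d i)) ∧ Function.Injective (d n)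

/-- `X` belongs to the left perpendicular category `X_C(R)` of the modules of finite
`C`-projective dimension: `Ext^1_R(X,M) = 0` for every finitely generated `M` of finite
`C`-projective dimension. -/
def InXC (R : Type) [CommRing R] (C : Type) [AddCommGroup C] [Module R C]
    (X : Type) [AddCommGroup X] [Module R X] : Prop :=
  ∀ (M : Type) [AddCommGroup M] [Module R M], Module.Finite R M →
    HasFinCpd R C M → extVanish R X M 1

/-- `depth R = t`, via the Ext characterization: `Ext^i(k,R) = 0` for `i < t` and
`Ext^t(k,R) ≠ 0`. -/
def RingDepthEq (R : Type) [CommRing R] [IsLocalRing R] (t : ℕ) : Prop :=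
  (∀ i : ℕ, i < t → extVanish R (ResidueField R) R i) ∧
    ¬ extVanish R (ResidueField R) R t

/-- A minimal free resolution `⋯ → R^{b₁} → R^{b₀} → M → 0` of `M`
(over a local ring, each differential has entries in the maximal ideal). -/
structure MinFreeRes (R : Type) [CommRing R] [IsLocalRing R]
    (M : Type) [AddCommGroup M] [Module R M] where
  b : ℕ → ℕ
  d : ∀ n : ℕ, ((Fin (b (n + 1)) → R) →ₗ[R] (Fin (b n) → R))
  aug : (Fin (b 0) → R) →ₗ[R] M
  aug_surj : Function.Surjective aug
  exact_aug : Function.Exact (d 0) aug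
  res_exact : ∀ n, Function.Exact (d (n + 1)) (d n)
  minimal : ∀ n, LinearMap.range (d n) ≤ (maximalIdeal R) • (⊤ : Submodule R (Fin (b n) → R))

/-- The Auslander transpose of the `n`-th syzygy `Ω^n M` (where `Ω^0 M = M`):
the cokernel of the `R`-dual of the differential `d n : F_{n+1} → F_n`,
i.e. `Tr (Ω^n M) = coker (Hom(F_n,R) → Hom(F_{n+1},R))`. -/
def AusTr {R : Type} [CommRing R] [IsLocalRing R] {M : Type} [AddCommGroup M] [Module R M]
    (res : MinFreeRes R M) (n : ℕ) : Type :=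
  Module.Dual R (Fin (res.b (n + 1)) → R) ⧸ LinearMap.range (res.d n).dualMap

instance {R : Type} [CommRing R] [IsLocalRing R] {M : Type} [AddCommGroup M] [Module R M]
    (res : MinFreeRes R M) (n : ℕ) : AddCommGroup (AusTr res n) := by
  unfold AusTr; infer_instance

instance {R : Type} [CommRing R] [IsLocalRing R] {M : Type} [AddCommGroup M] [Module R M]
    (res : MinFreeRes R M) (n : ℕ) : Module R (AusTr res n) := by
  unfold AusTr; infer_instance

/-- `X` is totally `C`-reflexive: the natural biduality map `X → Hom(Hom(X,C),C)` is
bijective and `Ext^i(X,C) = Ext^i(Hom(X,C),C) = 0` for all `i > 0`. -/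
def IsTotallyCReflexive (R : Type) [CommRing R] (C X : Type) [AddCommGroup C] [Module R C]
    [AddCommGroup X] [Module R X] : Prop :=
  Function.Bijective ((LinearMap.id : (X →ₗ[R] C) →ₗ[R] (X →ₗ[R] C)).flip) ∧
  (∀ i : ℕ, 0 < i → extVanish R X C i) ∧
  (∀ i : ℕ, 0 < i → extVanish R (X →ₗ[R] C) C i)

/-- `C` has finite injective dimension (tested by Ext-vanishing against finitely
generated modules, which is equivalent over a noetherian ring). -/
def HasFiniteInjDim (R : Type) [CommRing R] (C : Type) [AddCommGroup C] [Module R C] : Prop :=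
  ∃ n : ℕ, ∀ (M : Type) [AddCommGroup M] [Module R M], Module.Finite R M →
    ∀ i : ℕ, n < i → extVanish R M C i

/-- A local ring is regular if its maximal ideal is generated by a regular sequence. -/
def IsRegLocal (R : Type) [CommRing R] [IsLocalRing R] : Prop :=
  ∃ xs : List R, IsRegular R xs ∧ Ideal.span {x | x ∈ xs} = maximalIdeal R

/-- `pd_R M ≤ n`, via Ext-vanishing against finitely generated test modules. -/
def ProjDimLE (R : Type) [CommRing R] (M : Type) [AddCommGroup M] [Module R M] (n : ℕ) : Prop :=
  ∀ (N : Type) [AddCommGroup N] [Module R N], Module.Finite R N →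
    ∀ i : ℕ, n < i → Subsingleton (extM R M N i)

/-- `pd_R M = n`. -/
def ProjDimEq (R : Type) [CommRing R] (M : Type) [AddCommGroup M] [Module R M] (n : ℕ) : Prop :=
  ProjDimLE R M n ∧ ∀ m : ℕ, m < n → ¬ ProjDimLE R M m

/-! Split a finite resolution `0 → F (n+1) → ⋯ → F 0 → M → 0` into short exact sequences
with kernels `K j = im (d j)`. Since `Ext^{>0}(X, F j) = 0`, the long exact sequences embed
`Ext^i(X, M)` into `Ext^{i+1}(X, K 0)`, …, into `Ext^{i+n+1}(X, F (n+1)) = 0`. For `X` totally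
`C`-reflexive, `Ext^{>0}(X, C) = 0`, so the modules `C^b` of a finite `C`-resolution qualify.
The long exact sequence in the second variable of `Ext` comes from the `Hom` complex of a
projective resolution of `X`, as `Hom` out of a projective object is exact. -/

open Limits

universe u

section HomComplex

variable {R : Type u} [Ring R] {C : Type*} [Category.{u} C] [Abelian C] [Linear R C]

lemma CategoryTheory.ShortComplex.ShortExact.map_linearCoyoneda_obj {S : ShortComplex C}
    (hS : S.ShortExact) (P : C) [Projective P] :
    (S.map ((linearCoyoneda R C).obj (Opposite.op P))).ShortExact := by
  have := hS.mono_f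
  have := hS.epi_g
  refine ModuleCat.shortComplex_shortExact _ ?_ ?_ ?_
  · intro (y : P ⟶ S.X₂)
    refine ⟨fun hy => ⟨hS.exact.lift y hy, hS.exact.lift_f y hy⟩, ?_⟩
    rintro ⟨(x : P ⟶ S.X₁), rfl⟩
    exact (Category.assoc _ _ _).trans (by rw [S.zero, comp_zero]; rfl)
  · intro (x : P ⟶ S.X₁) (x' : P ⟶ S.X₁) h
    exact (cancel_mono S.f).mp h
  · intro (y : P ⟶ S.X₃)
    exact ⟨Projective.factorThru y S.g, Projective.factorThru_comp y S.g⟩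

namespace ChainComplex

variable (K : ChainComplex C ℕ)

def linearYonedaMap {A B : C} (f : A ⟶ B) : K.linearYonedaObj R A ⟶ K.linearYonedaObj R B where
  f i := ((linearCoyoneda R C).obj (Opposite.op (K.X i))).map f
  comm' _ _ _ := by
    ext
    exact (Category.assoc _ _ _).symm

def linearYonedaShortComplex (S : ShortComplex C) :
    ShortComplex (CochainComplex (ModuleCat R) ℕ) :=
  ShortComplex.mk (K.linearYonedaMap S.f) (K.linearYonedaMap S.g) (by
    ext i (x : K.X i ⟶ S.X₁)
    exact (Category.assoc _ _ _).trans (by rw [S.zero, comp_zero]; rfl))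

lemma shortExact_linearYonedaShortComplex [∀ i, Projective (K.X i)] {S : ShortComplex C}
    (hS : S.ShortExact) : (K.linearYonedaShortComplex (R := R) S).ShortExact :=
  HomologicalComplex.shortExact_of_degreewise_shortExact _ fun i =>
    hS.map_linearCoyoneda_obj (K.X i)

lemma isZero_homology_linearYonedaObj {Y : C} (hY : IsZero Y) (i : ℕ) :
    IsZero ((K.linearYonedaObj R Y).homology i) := by
  refine ShortComplex.isZero_homology_of_isZero_X₂ _ ?_
  rw [ModuleCat.isZero_iff_subsingleton]
  exact ⟨fun (a b : K.X i ⟶ Y) => hY.eq_of_tgt a b⟩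

end ChainComplex

end HomComplex

section ExtLongExactSequence

variable {R : Type u} [Ring R] {C : Type*} [Category.{u} C] [Abelian C] [Linear R C]
  [EnoughProjectives C] (X : C)

lemma isZero_Ext_of_isZero {Y : C} (hY : IsZero Y) (i : ℕ) :
    IsZero (((Ext R C i).obj (Opposite.op X)).obj Y) :=
  ((ProjectiveResolution.of X).complex.isZero_homology_linearYonedaObj hY i).of_iso
    ((ProjectiveResolution.of X).isoExt i Y)

variable {S : ShortComplex C} (hS : S.ShortExact) (i : ℕ)
include hS

lemma isZero_Ext_X₃_of_shortExact (h₂ : IsZero (((Ext R C i).obj (Opposite.op X)).obj S.X₂))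
    (h₁ : IsZero (((Ext R C (i + 1)).obj (Opposite.op X)).obj S.X₁)) :
    IsZero (((Ext R C i).obj (Opposite.op X)).obj S.X₃) := by
  let P := ProjectiveResolution.of X
  refine IsZero.of_iso ?_ (P.isoExt i S.X₃)
  refine ((P.complex.shortExact_linearYonedaShortComplex hS).homology_exact₃ i (i + 1)
    rfl).isZero_X₂ ?_ ?_
  · exact (h₂.of_iso (P.isoExt i S.X₂).symm).eq_of_src _ _
  · exact (h₁.of_iso (P.isoExt (i + 1) S.X₁).symm).eq_of_tgt _ _

lemma isZero_Ext_X₂_of_shortExact (h₁ : IsZero (((Ext R C i).obj (Opposite.op X)).obj S.X₁))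
    (h₃ : IsZero (((Ext R C i).obj (Opposite.op X)).obj S.X₃)) :
    IsZero (((Ext R C i).obj (Opposite.op X)).obj S.X₂) := by
  let P := ProjectiveResolution.of X
  refine IsZero.of_iso ?_ (P.isoExt i S.X₂)
  refine ((P.complex.shortExact_linearYonedaShortComplex hS).homology_exact₂ i).isZero_X₂ ?_ ?_
  · exact (h₁.of_iso (P.isoExt i S.X₁).symm).eq_of_src _ _
  · exact (h₃.of_iso (P.isoExt i S.X₃).symm).eq_of_tgt _ _

end ExtLongExactSequence

section ExtVanish

variable {R : Type} [CommRing R] {X : Type} [AddCommGroup X] [Module R X]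
  {A B M : Type} [AddCommGroup A] [Module R A] [AddCommGroup B] [Module R B]
  [AddCommGroup M] [Module R M] {i : ℕ}

lemma extVanish_iff_isZero : extVanish R X M i ↔ IsZero (extM R X M i) :=
  ModuleCat.isZero_iff_subsingleton.symm

lemma extVanish_of_subsingleton [Subsingleton M] : extVanish R X M i :=
  extVanish_iff_isZero.mpr <| isZero_Ext_of_isZero _ (ModuleCat.isZero_of_subsingleton _) i

lemma extVanish_congr (e : A ≃ₗ[R] B) : extVanish R X A i ↔ extVanish R X B i :=
  (((Ext R (ModuleCat R) i).obj (Opposite.op (ModuleCat.of R X))).mapIso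
    e.toModuleIso).toLinearEquiv.toEquiv.subsingleton_congr

variable {f : A →ₗ[R] B} {g : B →ₗ[R] M}

lemma Function.Exact.shortExact_moduleCatMk (hfg : Function.Exact f g)
    (hf : Function.Injective f) (hg : Function.Surjective g) :
    (ShortComplex.moduleCatMk f g hfg.linearMap_comp_eq_zero).ShortExact :=
  ModuleCat.shortComplex_shortExact _ hfg hf hg

lemma extVanish_right_of_exact (hfg : Function.Exact f g) (hf : Function.Injective f)
    (hg : Function.Surjective g) (hB : extVanish R X B i) (hA : extVanish R X A (i + 1)) :
    extVanish R X M i := by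
  rw [extVanish_iff_isZero] at *
  exact isZero_Ext_X₃_of_shortExact _ (hfg.shortExact_moduleCatMk hf hg) i hB hA

lemma extVanish_middle_of_exact (hfg : Function.Exact f g) (hf : Function.Injective f)
    (hg : Function.Surjective g) (hA : extVanish R X A i) (hM : extVanish R X M i) :
    extVanish R X B i := by
  rw [extVanish_iff_isZero] at *
  exact isZero_Ext_X₂_of_shortExact _ (hfg.shortExact_moduleCatMk hf hg) i hA hM

lemma extVanish_pi (hA : extVanish R X A i) : ∀ b : ℕ, extVanish R X (Fin b → A) i
  | 0 => extVanish_of_subsingleton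
  | b + 1 => (extVanish_congr (Fin.consLinearEquiv R fun _ : Fin (b + 1) => A)).mp <|
      extVanish_middle_of_exact Function.Exact.inl_snd LinearMap.inl_injective
        LinearMap.snd_surjective hA (extVanish_pi hA b)

lemma extVanish_of_exact_of_surjective (hfg : Function.Exact f g) (hg : Function.Surjective g)
    (hB : extVanish R X B i) (hrange : extVanish R X (LinearMap.range f) (i + 1)) :
    extVanish R X M i :=
  extVanish_right_of_exact (f := (LinearMap.range f).subtype)
    (LinearMap.exact_iff.mpr <| by rw [Submodule.range_subtype, hfg.linearMap_ker_eq])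
    (Submodule.injective_subtype _) hg hB hrange

section DimensionShift

variable {F : ℕ → Type} [∀ j, AddCommGroup (F j)] [∀ j, Module R (F j)]
  (hF : ∀ j i, 0 < i → extVanish R X (F j) i) {n : ℕ} {d : ∀ j, F (j + 1) →ₗ[R] F j}
  (hd : ∀ j < n, Function.Exact (d (j + 1)) (d j)) (hdn : Function.Injective (d n))
include hF hd hdn

lemma extVanish_range_of_exact_of_injective {k : ℕ} (hk : k ≤ n) :
    ∀ i, 0 < i → extVanish R X (LinearMap.range (d k)) i := by
  induction hk using Nat.decreasingInduction with
  | self => exact fun i hi => (extVanish_congr (LinearEquiv.ofInjective (d n) hdn)).mp (hF _ i hi)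
  | of_succ k hk ih =>
    exact fun i hi => extVanish_of_exact_of_surjective
      (LinearMap.exact_iff.mpr <| (d k).ker_rangeRestrict.trans (hd k hk).linearMap_ker_eq)
      (d k).surjective_rangeRestrict (hF _ i hi) (ih (i + 1) i.succ_pos)

theorem extVanish_of_finite_resolution {aug : F 0 →ₗ[R] M} (haug : Function.Surjective aug)
    (hd0 : Function.Exact (d 0) aug) : ∀ i, 0 < i → extVanish R X M i :=
  fun i hi => extVanish_of_exact_of_surjective hd0 haug (hF 0 i hi)
    (extVanish_range_of_exact_of_injective hF hd hdn n.zero_le (i + 1) i.succ_pos)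

end DimensionShift

end ExtVanish

theorem totally_reflexive_mem_perp_general
    (R : Type) [CommRing R]
    (C : Type) [AddCommGroup C] [Module R C]
    (X : Type) [AddCommGroup X] [Module R X]
    (hX : IsTotallyCReflexive R C X) :
    InXC R C X := by
  rintro M _ _ - ⟨n, b, d, aug, haug, hd0, hd, hdn⟩
  exact extVanish_of_finite_resolution (F := fun j => Fin (b j) → C)
    (fun j i hi => extVanish_pi (hX.2.1 i hi) (b j)) hd hdn haug hd0 1 one_pos

/-- Every totally `C`-reflexive module `X` over a commutative noetherian local ring `R`
satisfies `Ext_R^1(X,M) = 0` for every finitely generated `M` of finite `C`-projective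
dimension; i.e. `G_C(R) ⊆ X_C(R)`. -/
theorem totally_reflexive_mem_perp
    (R : Type) [CommRing R] [IsNoetherianRing R] [IsLocalRing R]
    (C : Type) [AddCommGroup C] [Module R C] (hC : IsSemidualizing R C)
    (X : Type) [AddCommGroup X] [Module R X] [Module.Finite R X]
    (hX : IsTotallyCReflexive R C X) :
    InXC R C X :=
  totally_reflexive_mem_perp_general R C X hX
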